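/- If θ is an equivalence relation on A × B that is closed under matching (i.e., if (p,q) θ (r,s) and (p',q') θ (r',s') then (p,q') θ (r,s')), then there exist equivalence relations θ₁ on A and θ₂ on B such that (a,b) θ (c,d) holds if and only if a θ₁ c and b θ₂ d. -/
import Mathlib


theorem matching_closed_equiv_is_product {A B : Type*} (θ : Setoid (A × B))
    (hmatch : ∀ p q r s p' q' r' s',
      θ.r (p, q) (r, s) → θ.r (p', q') (r', s') → θ.r (p, q') (r, s')) :
    ∃ (θ₁ : Setoid A) (θ₂ : Setoid B),
      ∀ a b c d, θ.r (a, b) (c, d) ↔ θ₁.r a c ∧ θ₂.r b d := by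
  refine ⟨⟨fun a c => ∀ b, θ.r (a, b) (c, b),
      ⟨fun a b => θ.refl _, fun h b => θ.symm (h b), fun h1 h2 b => θ.trans (h1 b) (h2 b)⟩⟩,
    ⟨fun b d => ∀ a, θ.r (a, b) (a, d),
      ⟨fun b a => θ.refl _, fun h a => θ.symm (h a), fun h1 h2 a => θ.trans (h1 a) (h2 a)⟩⟩,
    fun a b c d => ?_⟩
  constructor
  · intro h
    constructor
    · intro b'
      exact hmatch a b c d a b' a b' h (θ.refl _)
    · intro a'
      exact hmatch a' b a' b a b c d (θ.refl _) h
  · rintro ⟨h1, h2⟩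
    exact hmatch a b c b a b a d (h1 b) (h2 a)
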